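/- arXiv:1905.11694 — 3 statements merged into one kernel-verified Lean document; each statement's English description precedes it below -/
import Mathlib

section
/- Given five average values S_top, S_bot, Ŝ_top, Ŝ_bot, S_n and total count n from the overlapping-region query system (with the denominators S_bot − Ŝ_top, S_top − Ŝ_bot nonzero, and M ≠ 0), the quantities B, T, M, and S_mid are uniquely determined: any two solutions (B, T, M, S_mid) and (B', T', M', S'_mid) of the system n·S_n = B·S_bot + T·S_top − M·S_mid, B + T − M = n, T·S_top = (T−M)·Ŝ_top + M·S_mid, B·S_bot = (B−M)·Ŝ_bot + M·S_mid with M, M' ≠ 0 coincide. -/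
/-! Subtracting the top (resp. bottom) query equation from the total one eliminates the hidden
middle average and leaves a linear equation in the single count `B` (resp. `T`) whose coefficient
`S_bot - Ŝ_top` (resp. `S_top - Ŝ_bot`) is nonzero. This pins down `B` and `T`, hence
`M = B + T - n`, and then `M ≠ 0` recovers `S_mid` from the top query. -/

namespace OverlapQuery

variable {R : Type*} [CommRing R]

theorem count_mul_sub_eq {n Sn Sa Sb Sh B T M Smid : R}
    (hsum : n * Sn = B * Sa + T * Sb - M * Smid) (hcount : B + T - M = n)
    (hstrip : T * Sb = (T - M) * Sh + M * Smid) :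
    B * (Sa - Sh) = n * (Sn - Sh) := by
  linear_combination -hsum - hstrip - Sh * hcount

theorem count_unique [IsDomain R] {n Sn Sa Sb Sh B T M Smid B' T' M' Smid' : R}
    (hne : Sa - Sh ≠ 0)
    (hsum : n * Sn = B * Sa + T * Sb - M * Smid) (hcount : B + T - M = n)
    (hstrip : T * Sb = (T - M) * Sh + M * Smid)
    (hsum' : n * Sn = B' * Sa + T' * Sb - M' * Smid') (hcount' : B' + T' - M' = n)
    (hstrip' : T' * Sb = (T' - M') * Sh + M' * Smid') :
    B = B' :=
  mul_right_cancel₀ hne <|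
    (count_mul_sub_eq hsum hcount hstrip).trans (count_mul_sub_eq hsum' hcount' hstrip').symm

end OverlapQuery

open OverlapQuery in
theorem stmt3_general (n Sn Sbot Stop Shtop Shbot : ℝ)
    (hne1 : Sbot - Shtop ≠ 0) (hne2 : Stop - Shbot ≠ 0)
    (B T M Smid B' T' M' Smid' : ℝ)
    (hM : M ≠ 0)
    (h1 : n * Sn = B * Sbot + T * Stop - M * Smid)
    (h2 : B + T - M = n)
    (h3 : T * Stop = (T - M) * Shtop + M * Smid)
    (h4 : B * Sbot = (B - M) * Shbot + M * Smid)
    (h1' : n * Sn = B' * Sbot + T' * Stop - M' * Smid')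
    (h2' : B' + T' - M' = n)
    (h3' : T' * Stop = (T' - M') * Shtop + M' * Smid')
    (h4' : B' * Sbot = (B' - M') * Shbot + M' * Smid') :
    B = B' ∧ T = T' ∧ M = M' ∧ Smid = Smid' := by
  have eB : B = B' := count_unique hne1 h1 h2 h3 h1' h2' h3'
  have eT : T = T' :=
    count_unique (n := n) (Sn := Sn) (B := T) (T := B) (B' := T') (T' := B')
      hne2 (by linear_combination h1) (by linear_combination h2) h4
      (by linear_combination h1') (by linear_combination h2') h4'
  have eM : M = M' := by linear_combination eB + eT - h2 + h2'
  subst eT eM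
  exact ⟨eB, rfl, rfl, mul_left_cancel₀ hM (by linear_combination h3' - h3)⟩

theorem stmt3 (n Sn Sbot Stop Shtop Shbot : ℝ)
    (hne1 : Sbot - Shtop ≠ 0) (hne2 : Stop - Shbot ≠ 0)
    (B T M Smid B' T' M' Smid' : ℝ)
    (hM : M ≠ 0) (hM' : M' ≠ 0)
    (h1 : n * Sn = B * Sbot + T * Stop - M * Smid)
    (h2 : B + T - M = n)
    (h3 : T * Stop = (T - M) * Shtop + M * Smid)
    (h4 : B * Sbot = (B - M) * Shbot + M * Smid)
    (h1' : n * Sn = B' * Sbot + T' * Stop - M' * Smid')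
    (h2' : B' + T' - M' = n)
    (h3' : T' * Stop = (T' - M') * Shtop + M' * Smid')
    (h4' : B' * Sbot = (B' - M') * Shbot + M' * Smid') :
    B = B' ∧ T = T' ∧ M = M' ∧ Smid = Smid' :=
  stmt3_general n Sn Sbot Stop Shtop Shbot hne1 hne2 B T M Smid B' T' M' Smid' hM h1 h2 h3 h4 h1'
    h2' h3' h4'
end

section
/- For every n ≥ 4 there exists an injective assignment of speeds s : Fin n → ℝ to vehicles at positions x_1 < x_2 < ⋯ < x_n such that for every contiguous range [x_i, x_j] containing at least 4 vehicles, none of min, max, or lower-median of {s_i, …, s_j} equals s_1. Consequently, an attacker restricted to F_min, F_max, F_med queries with query-set-size threshold k = 4 never observes s_1. -/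
/-!
Give vehicle 0 speed 0, vehicle 1 speed 1 and every later vehicle `k` the negative speed `-k`.
A range not containing vehicle 0 cannot report its speed, by injectivity. A range `[0, j]` with
`j ≥ 3` contains the larger speed 1 and the `j - 1` negative speeds of vehicles `2, …, j`; these
are more than half of its `j + 1` speeds, so its minimum and its lower median are negative.
-/

/-- The lower median of a finite set of reals: the `⌈m/2⌉`-th smallest of its
`m` elements (the lower of the two central values when `m` is even). -/
noncomputable def lowerMedian (F : Finset ℝ) : ℝ :=
  (F.sort (· ≤ ·)).getD ((F.card - 1) / 2) 0

open Finset

lemma lowerMedian_eq_orderEmbOfFin (F : Finset ℝ) (hF : 0 < #F) :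
    lowerMedian F = F.orderEmbOfFin rfl ⟨(#F - 1) / 2, by omega⟩ := by
  rw [lowerMedian, orderEmbOfFin_apply, List.getD_eq_getElem]
  rfl

lemma lowerMedian_mem {F : Finset ℝ} (hF : F.Nonempty) : lowerMedian F ∈ F := by
  rw [lowerMedian_eq_orderEmbOfFin F hF.card_pos]
  exact orderEmbOfFin_mem _ _ _

lemma lowerMedian_lt_of_lt_card_filter_lt {F : Finset ℝ} {c : ℝ}
    (h : (#F - 1) / 2 < #(F.filter (· < c))) : lowerMedian F < c := by
  have hF : 0 < #F := by have := card_filter_le F (· < c); omega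
  rw [lowerMedian_eq_orderEmbOfFin F hF]
  set e := F.orderEmbOfFin rfl
  set t : Fin #F := ⟨(#F - 1) / 2, by omega⟩
  by_contra! hc
  have hsub : F.filter (· < c) ⊆ (Iio t).image e := by
    intro x hx
    rw [mem_filter] at hx
    obtain ⟨m, rfl⟩ : x ∈ Set.range e := by rw [range_orderEmbOfFin]; exact hx.1
    exact mem_image_of_mem e (mem_Iio.mpr (e.lt_iff_lt.mp (hx.2.trans_le hc)))
  have := (card_le_card hsub).trans card_image_le
  rw [Fin.card_Iio] at this
  exact lt_irrefl _ (h.trans_le this)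

def speed (n : ℕ) (k : Fin n) : ℝ := if (k : ℕ) = 1 then 1 else -(k : ℕ)

lemma speed_injective (n : ℕ) : Function.Injective (speed n) := by
  intro a b hab
  unfold speed at hab
  apply Fin.ext
  split_ifs at hab with ha hb hb
  · omega
  · have : (0 : ℝ) ≤ b := Nat.cast_nonneg _
    linarith
  · have : (0 : ℝ) ≤ a := Nat.cast_nonneg _
    linarith
  · exact_mod_cast neg_injective hab

lemma speed_zero {n : ℕ} (h0 : 0 < n) : speed n ⟨0, h0⟩ = 0 := by
  simp [speed]

lemma speed_neg {n : ℕ} (k : Fin n) (hk : 2 ≤ (k : ℕ)) : speed n k < 0 := by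
  have : (2 : ℝ) ≤ (k : ℕ) := by exact_mod_cast hk
  rw [speed, if_neg (by omega)]
  linarith

lemma Function.Injective.apply_notMem_image_Icc {n : ℕ} {α : Type*} [DecidableEq α]
    {s : Fin n → α} (hs : Function.Injective s) {k i : Fin n} (hki : k < i) (j : Fin n) :
    s k ∉ (Icc i j).image s := by
  rw [hs.mem_finset_image, mem_Icc]
  exact fun h => (h.1.trans_lt hki).false

lemma lowerMedian_image_speed_Icc_neg {n : ℕ} (h0 : 0 < n) (j : Fin n) (hj : 3 ≤ (j : ℕ)) :
    lowerMedian ((Icc ⟨0, h0⟩ j).image (speed n)) < 0 := by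
  apply lowerMedian_lt_of_lt_card_filter_lt
  have hneg : (Icc ⟨2, by omega⟩ j).image (speed n) ⊆
      ((Icc ⟨0, h0⟩ j).image (speed n)).filter (· < 0) := by
    intro x hx
    obtain ⟨k, hk, rfl⟩ := mem_image.mp hx
    rw [mem_Icc] at hk
    refine mem_filter.mpr ⟨mem_image_of_mem _ (mem_Icc.mpr ⟨?_, hk.2⟩), speed_neg k hk.1⟩
    exact Fin.mk_le_of_le_val (Nat.zero_le _)
  have := card_le_card hneg
  simp only [card_image_of_injective _ (speed_injective n), Fin.card_Icc] at this ⊢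
  omega

theorem stmt7 (n : ℕ) :
    ∃ s : Fin n → ℝ, Function.Injective s ∧
      ∀ i j : Fin n, (hij : i ≤ j) → 4 ≤ (j : ℕ) - (i : ℕ) + 1 →
        ((Finset.Icc i j).image s).min'
            ⟨s i, Finset.mem_image_of_mem s (Finset.mem_Icc.mpr ⟨le_refl i, hij⟩)⟩
          ≠ s ⟨0, by omega⟩ ∧
        ((Finset.Icc i j).image s).max'
            ⟨s i, Finset.mem_image_of_mem s (Finset.mem_Icc.mpr ⟨le_refl i, hij⟩)⟩
          ≠ s ⟨0, by omega⟩ ∧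
        lowerMedian ((Finset.Icc i j).image s) ≠ s ⟨0, by omega⟩ := by
  refine ⟨speed n, speed_injective n, fun i j hij hsize => ?_⟩
  have h0 : 0 < n := i.pos
  rcases Nat.eq_zero_or_pos i with hi | hi
  · obtain rfl : i = ⟨0, h0⟩ := Fin.ext hi
    have hj : 3 ≤ (j : ℕ) := by omega
    have hz := (speed_zero h0).symm
    refine ⟨?_, ?_, ((lowerMedian_image_speed_Icc_neg h0 j hj).trans_eq hz).ne⟩
    · exact ((min'_le _ _ (mem_image_of_mem _ (right_mem_Icc.mpr hij))).trans_lt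
        ((speed_neg j (by omega)).trans_eq hz)).ne
    · have h1 : speed n ⟨1, by omega⟩ = 1 := by simp [speed]
      refine (hz.symm.trans_lt (zero_lt_one.trans_le
        (h1 ▸ le_max' _ _ (mem_image_of_mem _ ?_)))).ne'
      exact mem_Icc.mpr ⟨Fin.mk_le_of_le_val (Nat.zero_le _), Fin.mk_le_of_le_val (by omega)⟩
  · have hne := mem_image_of_mem (speed n) (mem_Icc.mpr ⟨le_refl i, hij⟩)
    have hz := (speed_injective n).apply_notMem_image_Icc (k := ⟨0, h0⟩) hi j
    exact ⟨fun h => hz (h ▸ min'_mem _ _), fun h => hz (h ▸ max'_mem _ _),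
      fun h => hz (h ▸ lowerMedian_mem ⟨_, hne⟩)⟩
end

section
/- Let s : Fin n → ℝ be injective, k = 3, and suppose game queries over contiguous windows of exactly 3 consecutive indices return the sets {min, median, max}. Then sliding the window by one position and comparing the 3-element value sets of consecutive windows identifies, for each step, the value of the vehicle that left the window: it is the unique element of the old window's value set not in the new window's value set. Iterating from the leftmost window determines s_i for all i. -/
open Finset

theorem Finset.Icc_sdiff_Icc_of_covBy {α : Type*} [LinearOrder α] [LocallyFiniteOrder α]
    {a b c d : α} (hab : a ⋖ b) (hac : a ≤ c) (hcd : c ≤ d) :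
    Icc a c \ Icc b d = {a} := by
  ext x
  simp only [mem_sdiff, mem_Icc, mem_singleton, not_and, not_le]
  constructor
  · rintro ⟨⟨hax, hxc⟩, hx⟩
    have hxb : x < b := lt_of_not_ge fun hbx => (hx hbx).not_ge (hxc.trans hcd)
    exact le_antisymm (hab.le_of_lt hxb) hax
  · rintro rfl
    exact ⟨⟨le_rfl, hac⟩, fun hba => (hab.lt.not_ge hba).elim⟩

theorem stmt19 (n : ℕ) (s : Fin n → ℝ) (hs : Function.Injective s) :
    ∀ i : ℕ, (h : i + 3 < n) →
      ((Finset.Icc (⟨i, by omega⟩ : Fin n) ⟨i + 2, by omega⟩).image s) \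
        ((Finset.Icc (⟨i + 1, by omega⟩ : Fin n) ⟨i + 3, by omega⟩).image s)
      = {s ⟨i, by omega⟩} := by
  intro i h
  rw [← image_sdiff _ _ hs, Icc_sdiff_Icc_of_covBy, image_singleton]
  · simp [Fin.covBy_iff]
  · simp [Fin.le_def]
  · simp [Fin.le_def]
end
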